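/- Let G be a finite connected graph with center C_G satisfying the uniform eccentricity property d_G(C_G, v) = ecc_G(v) − rad(G) for all v, and let φ : G → H be a surjective map satisfying (1/A)·d_G(x,y) − B ≤ d_H(φ(x),φ(y)) ≤ d_G(x,y) for all x,y. Then the center-shift d_G(C_G, φ⁻¹(C_H)) is at most (A−1)·rad(H) + A·B. -/

import Mathlib

open SimpleGraph

/-- The eccentricity of a vertex: the maximum distance to any vertex. -/
noncomputable def ecc {V : Type*} [Fintype V] (G : SimpleGraph V) (v : V) : ℕ :=
  Finset.univ.sup (fun u => G.dist v u)

/-- The radius: the minimum eccentricity. -/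
noncomputable def grad {V : Type*} [Fintype V] (G : SimpleGraph V) : ℕ :=
  sInf {n : ℕ | ∃ v : V, ecc G v = n}

/-- The center: the set of vertices of minimum eccentricity. -/
noncomputable def center {V : Type*} [Fintype V] (G : SimpleGraph V) : Set V :=
  {v : V | ecc G v = grad G}

/-- The center-shift of a surjective map `φ : G → H`: the minimum `G`-distance
between a center vertex of `G` and a preimage of a center vertex of `H`. -/
noncomputable def centerShift {V W : Type*} [Fintype V] [Fintype W]
    (G : SimpleGraph V) (H : SimpleGraph W) (φ : V → W) : ℕ :=
  sInf {n : ℕ | ∃ u v : V, u ∈ _root_.center G ∧ φ v ∈ _root_.center H ∧ G.dist u v = n}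

/-!
A center vertex `c` of `G` maps to a vertex of eccentricity at most `ecc c`, because `φ` is
surjective and `1`-Lipschitz; hence `rad H ≤ rad G`. Now pick `v` with `φ v` central in `H`.
The lower quasi-isometry bound gives `ecc v ≤ A (rad H + B)`, and the uniform eccentricity
property turns this into `d(C_G, v) = ecc v - rad G ≤ A (rad H + B) - rad H`.
-/

section Eccentricity

variable {V : Type*} [Fintype V] (G : SimpleGraph V)

theorem dist_le_ecc (v u : V) : G.dist v u ≤ ecc G v :=
  Finset.le_sup (Finset.mem_univ u)

theorem exists_dist_eq_ecc [Nonempty V] (v : V) : ∃ u, G.dist v u = ecc G v := by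
  obtain ⟨u, -, hu⟩ := Finset.exists_mem_eq_sup Finset.univ Finset.univ_nonempty
    (fun u => G.dist v u)
  exact ⟨u, hu.symm⟩

theorem grad_le_ecc (v : V) : grad G ≤ ecc G v :=
  Nat.sInf_le ⟨v, rfl⟩

theorem center_nonempty [Nonempty V] : (_root_.center G).Nonempty :=
  Nat.sInf_mem
    (⟨ecc G (Classical.arbitrary V), _, rfl⟩ : {n : ℕ | ∃ v : V, ecc G v = n}.Nonempty)

end Eccentricity

section SurjectiveMap

variable {V W : Type*} [Fintype V] [Fintype W] (G : SimpleGraph V) (H : SimpleGraph W)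
  {φ : V → W}

theorem ecc_apply_le_of_surjective (hsurj : Function.Surjective φ)
    (hlip : ∀ x y, H.dist (φ x) (φ y) ≤ G.dist x y) (v : V) :
    ecc H (φ v) ≤ ecc G v := by
  refine Finset.sup_le fun w _ => ?_
  obtain ⟨x, rfl⟩ := hsurj w
  exact (hlip v x).trans (dist_le_ecc G v x)

theorem grad_le_grad_of_surjective [Nonempty V] (hsurj : Function.Surjective φ)
    (hlip : ∀ x y, H.dist (φ x) (φ y) ≤ G.dist x y) :
    grad H ≤ grad G := by
  obtain ⟨c, hc⟩ := center_nonempty G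
  calc grad H ≤ ecc H (φ c) := grad_le_ecc H (φ c)
    _ ≤ ecc G c := ecc_apply_le_of_surjective G H hsurj hlip c
    _ = grad G := hc

theorem ecc_le_of_apply_mem_center [Nonempty V] {A B : ℝ} (hA : 0 < A)
    (hlow : ∀ x y, (1 / A) * G.dist x y - B ≤ (H.dist (φ x) (φ y) : ℝ))
    {v : V} (hv : φ v ∈ _root_.center H) :
    (ecc G v : ℝ) ≤ A * (grad H + B) := by
  obtain ⟨u, hu⟩ := exists_dist_eq_ecc G v
  have hdist : (H.dist (φ v) (φ u) : ℝ) ≤ grad H := by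
    rw [← hv]
    exact_mod_cast dist_le_ecc H (φ v) (φ u)
  calc (ecc G v : ℝ) = A * ((1 / A) * G.dist v u) := by
        rw [← hu]
        field_simp
    _ ≤ A * (grad H + B) := by
        gcongr
        linarith [hlow v u]

theorem centerShift_le_of_apply_mem_center [Nonempty V] (φ : V → W) {v : V}
    (hv : φ v ∈ _root_.center H) :
    centerShift G H φ ≤ sInf {n : ℕ | ∃ c ∈ _root_.center G, G.dist c v = n} := by
  obtain ⟨c, hc⟩ := center_nonempty G
  obtain ⟨c', hc', hd⟩ := Nat.sInf_mem (⟨G.dist c v, c, hc, rfl⟩ :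
    {n : ℕ | ∃ c ∈ _root_.center G, G.dist c v = n}.Nonempty)
  rw [← hd]
  exact Nat.sInf_le ⟨c', v, hc', hv, rfl⟩

end SurjectiveMap

theorem centerShift_le_one_sided_general {V W : Type*} [Fintype V] [Fintype W]
    (G : SimpleGraph V) (H : SimpleGraph W)
    (hG : G.Connected)
    (huniecc : ∀ v : V, sInf {n : ℕ | ∃ c ∈ _root_.center G, G.dist c v = n} =
      ecc G v - grad G)
    (A B : ℝ) (hA : 1 ≤ A)
    (φ : V → W) (hsurj : Function.Surjective φ)
    (hQ1 : ∀ x y : V, (1 / A) * G.dist x y - B ≤ (H.dist (φ x) (φ y) : ℝ) ∧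
        (H.dist (φ x) (φ y) : ℝ) ≤ (G.dist x y : ℝ)) :
    (centerShift G H φ : ℝ) ≤ (A - 1) * grad H + A * B := by
  have : Nonempty V := hG.nonempty
  have : Nonempty W := hG.nonempty.map φ
  obtain ⟨w, hw⟩ := center_nonempty H
  obtain ⟨v, rfl⟩ := hsurj w
  have hshift := centerShift_le_of_apply_mem_center G H φ hw
  rw [huniecc v] at hshift
  have hrad : grad H ≤ grad G :=
    grad_le_grad_of_surjective G H hsurj fun x y => by exact_mod_cast (hQ1 x y).2
  have hecc := ecc_le_of_apply_mem_center G H (by linarith) (fun x y => (hQ1 x y).1) hw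
  have hshift' : (centerShift G H φ : ℝ) ≤ ecc G v - grad G := by
    rw [← Nat.cast_sub (grad_le_ecc G v)]
    exact_mod_cast hshift
  have hrad' : (grad H : ℝ) ≤ grad G := by exact_mod_cast hrad
  linarith

/-- If `G` satisfies the uniform eccentricity property and `φ : G → H` is a
surjective one-sided quasi-isometry, then the center-shift is at most
`(A - 1)·rad(H) + A·B`. -/
theorem centerShift_le_one_sided {V W : Type*} [Fintype V] [Fintype W]
    (G : SimpleGraph V) (H : SimpleGraph W)
    (hG : G.Connected) (hH : H.Connected)
    (huniecc : ∀ v : V, sInf {n : ℕ | ∃ c ∈ _root_.center G, G.dist c v = n} =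
      ecc G v - grad G)
    (A B : ℝ) (hA : 1 ≤ A) (hB : 0 ≤ B)
    (φ : V → W) (hsurj : Function.Surjective φ)
    (hQ1 : ∀ x y : V, (1 / A) * G.dist x y - B ≤ (H.dist (φ x) (φ y) : ℝ) ∧
        (H.dist (φ x) (φ y) : ℝ) ≤ (G.dist x y : ℝ)) :
    (centerShift G H φ : ℝ) ≤ (A - 1) * grad H + A * B :=
  centerShift_le_one_sided_general G H hG huniecc A B hA φ hsurj hQ1
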